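/- Let G be a finite group, H a subgroup of G, and Q a p-subgroup of G. Then |N_G(Q,H) : H| ≡ |G : H| (mod p), where N_G(Q,H) = { x ∈ G | xQx⁻¹ ≤ H }. -/

import Mathlib

/-! `x ↦ x⁻¹H` maps `N_G(Q,H)` onto the cosets fixed by `Q` acting on `G ⧸ H` by left
multiplication, with fibres the cosets `Hx`. So `|N_G(Q,H) : H|` is the number of fixed points
of the `p`-group `Q` on `G ⧸ H`, which is congruent to `|G ⧸ H|` mod `p` since every other orbit
has size a positive power of `p`. -/

open MulAction

namespace QuotientGroup

variable {G : Type*} [Group G]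

theorem mk_mem_fixedPoints_iff (H Q : Subgroup G) (x : G) :
    (x : G ⧸ H) ∈ fixedPoints Q (G ⧸ H) ↔ ∀ q ∈ Q, x⁻¹ * q * x ∈ H := by
  simp only [mem_fixedPoints, Subtype.forall]
  refine forall₂_congr fun q _ => ?_
  change ((q * x : G) : G ⧸ H) = x ↔ _
  rw [eq_comm, QuotientGroup.eq, mul_assoc]

theorem card_setOf_conj_mem_eq_card_mul_card_fixedPoints (H Q : Subgroup G) :
    Nat.card {x : G // ∀ q ∈ Q, x * q * x⁻¹ ∈ H} =
      Nat.card H * Nat.card (fixedPoints Q (G ⧸ H)) := by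
  rw [← card_preimage_mk]
  refine Nat.card_congr ((Equiv.inv G).subtypeEquiv fun x => ?_)
  rw [Set.mem_preimage, Equiv.inv_apply, mk_mem_fixedPoints_iff, inv_inv]

end QuotientGroup

/-- Lemma (counting cosets mod p): if `G` is a finite group, `H ≤ G` and `Q` is a
`p`-subgroup of `G`, then `|N_G(Q,H) : H| ≡ |G : H| (mod p)`, where
`N_G(Q,H) = { x ∈ G | xQx⁻¹ ≤ H }`. -/
theorem counting_cosets_mod_p {G : Type*} [Group G] [Fintype G] (p : ℕ) (hp : p.Prime)
    (H Q : Subgroup G) (hQ : IsPGroup p Q) :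
    Nat.card {x : G // ∀ q ∈ Q, x * q * x⁻¹ ∈ H} / Nat.card H ≡ H.index [MOD p] := by
  have : Fact p.Prime := ⟨hp⟩
  rw [QuotientGroup.card_setOf_conj_mem_eq_card_mul_card_fixedPoints,
    Nat.mul_div_cancel_left _ Nat.card_pos]
  exact (hQ.card_modEq_card_fixedPoints (G ⧸ H)).symm
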